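/- Let g1 and g2 be finite labeled graphs in which every vertex and every edge carries the same label A. Then the maximum of |V(g)| + |E(g)| over all common subgraphs g of g1 and g2 equals min(|V(g1)|, |V(g2)|) + M, where M is the maximum of |E(g)| over all common subgraphs g of g1 and g2 (the Maximum Common Edge Subgraph value). Consequently, any common subgraph g_s maximizing |V(g)| + |E(g)| satisfies |E(g_s)| = M, i.e., g_s has as many edges as a maximum common edge subgraph of g1 and g2. -/

import Mathlib

/-- A finite labeled graph: a finite vertex set `V ⊆ ℕ`, an edge set `E ⊆ V × V`,
and labeling functions for vertices and edges. -/
structure LGraph (L : Type*) where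
  V : Finset ℕ
  E : Finset (ℕ × ℕ)
  edge_mem : ∀ e ∈ E, e.1 ∈ V ∧ e.2 ∈ V
  lv : ℕ → L
  le : ℕ × ℕ → L

/-- A vertex matching between labeled graphs `g1` and `g2`: an injective partial
function from the vertices of `g1` to the vertices of `g2`. -/
structure VMatching {L : Type*} (g1 g2 : LGraph L) where
  f : ℕ → Option ℕ
  dom_sub : ∀ v w, f v = some w → v ∈ g1.V
  ran_sub : ∀ v w, f v = some w → w ∈ g2.V
  inj : ∀ v v' w, f v = some w → f v' = some w → v = v'

open Classical in
/-- Support `s_φ(v)` of a vertex `v` of `g1` under matching `φ`. -/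
noncomputable def vSupport {L : Type*} {g1 g2 : LGraph L} (φ : VMatching g1 g2) (v : ℕ) : ℕ :=
  match φ.f v with
  | some w => if g1.lv v = g2.lv w then 1 else 0
  | none => 0

open Classical in
/-- Support `s_φ(e)` of an edge `e` of `g1` under matching `φ`. -/
noncomputable def eSupport {L : Type*} {g1 g2 : LGraph L} (φ : VMatching g1 g2) (e : ℕ × ℕ) : ℕ :=
  match φ.f e.1, φ.f e.2 with
  | some w1, some w2 => if (w1, w2) ∈ g2.E ∧ g1.le e = g2.le (w1, w2) then 1 else 0
  | _, _ => 0

/-- Total support of a matching: `Σ_{v ∈ V1} s_φ(v) + Σ_{e ∈ E1} s_φ(e)`. -/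
noncomputable def totalSupport {L : Type*} {g1 g2 : LGraph L} (φ : VMatching g1 g2) : ℕ :=
  (∑ v ∈ g1.V, vSupport φ v) + (∑ e ∈ g1.E, eSupport φ e)

/-- A best vertex match maximizes total support over all matchings. -/
def IsBestMatch {L : Type*} {g1 g2 : LGraph L} (φ : VMatching g1 g2) : Prop :=
  ∀ ψ : VMatching g1 g2, totalSupport ψ ≤ totalSupport φ

/-- A label-preserving injective homomorphism from `g` into `h`. -/
def IsHom {L : Type*} (g h : LGraph L) (ψ : ℕ → ℕ) : Prop :=
  Set.InjOn ψ ↑g.V ∧ (∀ v ∈ g.V, ψ v ∈ h.V) ∧ (∀ v ∈ g.V, g.lv v = h.lv (ψ v)) ∧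
  (∀ e ∈ g.E, (ψ e.1, ψ e.2) ∈ h.E ∧ g.le e = h.le (ψ e.1, ψ e.2))

/-- `g` is a common subgraph of `g1` and `g2`. -/
def IsCommonSubgraph {L : Type*} (g g1 g2 : LGraph L) : Prop :=
  ∃ ψ1 ψ2 : ℕ → ℕ, IsHom g g1 ψ1 ∧ IsHom g g2 ψ2

/-- Every vertex and edge of `g` carries the label `A`. -/
def AllLabel {L : Type*} (g : LGraph L) (A : L) : Prop :=
  (∀ v ∈ g.V, g.lv v = A) ∧ (∀ e ∈ g.E, g.le e = A)

/-- `g` is `θ`-supported by the collection `{g1, g2}`: there are best vertex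
matches from `g` to `g1` and `g2` under which every vertex and edge of `g`
has support at least `θ`. -/
def ThetaSupported2 {L : Type*} (g g1 g2 : LGraph L) (θ : ℕ) : Prop :=
  ∃ φ1 : VMatching g g1, ∃ φ2 : VMatching g g2,
    IsBestMatch φ1 ∧ IsBestMatch φ2 ∧
    (∀ v ∈ g.V, θ ≤ vSupport φ1 v + vSupport φ2 v) ∧
    (∀ e ∈ g.E, θ ≤ eSupport φ1 e + eSupport φ2 e)

/-- The total support of `g` with respect to `h` under a best vertex match
(the maximal achievable total support). -/
noncomputable def bestSupport {L : Type*} (g h : LGraph L) : ℕ :=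
  sSup {n | ∃ φ : VMatching g h, totalSupport φ = n}

/-! A common subgraph has at most `min |V(g1)| |V(g2)|` vertices and at most `M` edges, so
`N ≤ min |V(g1)| |V(g2)| + M`. Conversely, since all labels coincide, a maximum common edge
subgraph can be padded with isolated vertices, sent injectively to unused vertices of `g1` and
`g2`, until it has `min |V(g1)| |V(g2)|` vertices. Hence equality holds, and a maximizer of
`|V| + |E|` must attain both bounds. -/

theorem Set.InjOn.exists_extend_of_card_le {α β : Type*} [DecidableEq β] {ψ : α → β}
    {s s' : Finset α} {t : Finset β} (hss' : s ⊆ s') (hinj : Set.InjOn ψ s)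
    (hmaps : Set.MapsTo ψ s t) (hcard : s'.card ≤ t.card) :
    ∃ ψ' : α → β, (∀ v ∈ s, ψ' v = ψ v) ∧ Set.InjOn ψ' s' ∧ Set.MapsTo ψ' s' t := by
  classical
  obtain ⟨t', himage, ht't, ht'card⟩ := Finset.exists_subsuperset_card_eq
    (Finset.image_subset_iff.mpr hmaps)
    ((Finset.card_image_of_injOn hinj).trans_le (Finset.card_le_card hss')) hcard
  obtain ⟨e, he⟩ := Set.MapsTo.exists_equiv_extend_of_card_eq (α := s') (t := t')
    (s := {v | v.1 ∈ s}) (f := fun v => ψ v) (by simpa using ht'card.symm)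
    (fun v hv => himage (Finset.mem_image_of_mem ψ hv))
    (fun v hv w hw hvw => Subtype.val_injective (hinj hv hw hvw))
  refine ⟨fun v => if hv : v ∈ s' then e ⟨v, hv⟩ else ψ v, ?_, ?_, ?_⟩
  · intro v hv
    simpa [hss' hv] using he ⟨v, hss' hv⟩ hv
  · intro v hv w hw hvw
    simp only [Finset.mem_coe] at hv hw
    simpa [hv, hw] using hvw
  · intro v hv
    simp only [Finset.mem_coe] at hv
    simpa [hv] using ht't (e ⟨v, hv⟩).2

section

variable {L : Type*} {g h g1 g2 : LGraph L} {ψ : ℕ → ℕ}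

theorem IsHom.card_V_le (hψ : IsHom g h ψ) : g.V.card ≤ h.V.card :=
  Finset.card_le_card_of_injOn ψ hψ.2.1 hψ.1

theorem IsCommonSubgraph.card_V_le_min (hg : IsCommonSubgraph g g1 g2) :
    g.V.card ≤ min g1.V.card g2.V.card :=
  let ⟨_, _, hψ1, hψ2⟩ := hg
  le_min hψ1.card_V_le hψ2.card_V_le

theorem IsHom.of_allLabel {A : L} (hg : AllLabel g A) (hh : AllLabel h A)
    (hinj : Set.InjOn ψ g.V) (hmaps : ∀ v ∈ g.V, ψ v ∈ h.V)
    (hedges : ∀ e ∈ g.E, (ψ e.1, ψ e.2) ∈ h.E) : IsHom g h ψ :=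
  ⟨hinj, hmaps, fun v hv => (hg.1 v hv).trans (hh.1 _ (hmaps v hv)).symm,
    fun e he => ⟨hedges e he, (hg.2 e he).trans (hh.2 _ (hedges e he)).symm⟩⟩

theorem IsCommonSubgraph.exists_card_V_eq {A : L} (h1 : AllLabel g1 A) (h2 : AllLabel g2 A)
    (hg : IsCommonSubgraph g g1 g2) {k : ℕ} (hgk : g.V.card ≤ k)
    (hk : k ≤ min g1.V.card g2.V.card) :
    ∃ g' : LGraph L, IsCommonSubgraph g' g1 g2 ∧ g'.V.card = k ∧ g'.E.card = g.E.card := by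
  obtain ⟨ψ1, ψ2, hψ1, hψ2⟩ := hg
  obtain ⟨V', hgV', hV'card⟩ := Infinite.exists_superset_card_eq g.V k hgk
  let g' : LGraph L :=
    { V := V'
      E := g.E
      edge_mem := fun e he => ⟨hgV' (g.edge_mem e he).1, hgV' (g.edge_mem e he).2⟩
      lv := fun _ => A
      le := fun _ => A }
  have hg' : AllLabel g' A := ⟨fun _ _ => rfl, fun _ _ => rfl⟩
  have extend : ∀ {h : LGraph L} {ψ : ℕ → ℕ}, AllLabel h A → IsHom g h ψ → k ≤ h.V.card →
      ∃ ψ', IsHom g' h ψ' := by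
    intro h ψ hh hψ hkh
    obtain ⟨ψ', hψψ', hinj, hmaps⟩ :=
      hψ.1.exists_extend_of_card_le hgV' hψ.2.1 (hV'card.trans_le hkh)
    refine ⟨ψ', .of_allLabel hg' hh hinj hmaps fun e he => ?_⟩
    obtain ⟨he1, he2⟩ := g.edge_mem e he
    rw [hψψ' _ he1, hψψ' _ he2]
    exact (hψ.2.2.2 e he).1
  obtain ⟨ψ1', hψ1'⟩ := extend h1 hψ1 (hk.trans (min_le_left _ _))
  obtain ⟨ψ2', hψ2'⟩ := extend h2 hψ2 (hk.trans (min_le_right _ _))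
  exact ⟨g', ⟨ψ1', ψ2', hψ1', hψ2'⟩, hV'card, rfl⟩

end

/-- if all labels of `g1` and `g2` equal `A`, the maximum `N` of
`|V(g)| + |E(g)|` over common subgraphs `g` of `g1` and `g2` equals
`min (|V(g1)|, |V(g2)|) + M`, where `M` is the Maximum Common Edge Subgraph
value; consequently any common subgraph maximizing `|V(g)| + |E(g)|` has
exactly `M` edges. -/
theorem max_total_eq_min_card_add_mces {L : Type*} (A : L) (g1 g2 : LGraph L)
    (h1 : AllLabel g1 A) (h2 : AllLabel g2 A) (N M : ℕ)
    (hN : IsGreatest {n | ∃ g : LGraph L, IsCommonSubgraph g g1 g2 ∧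
      g.V.card + g.E.card = n} N)
    (hM : IsGreatest {n | ∃ g : LGraph L, IsCommonSubgraph g g1 g2 ∧
      g.E.card = n} M) :
    N = min g1.V.card g2.V.card + M ∧
    ∀ gs : LGraph L, IsCommonSubgraph gs g1 g2 → gs.V.card + gs.E.card = N →
      gs.E.card = M := by
  have bound : ∀ g : LGraph L, IsCommonSubgraph g g1 g2 →
      g.V.card ≤ min g1.V.card g2.V.card ∧ g.E.card ≤ M :=
    fun g hg => ⟨hg.card_V_le_min, hM.2 ⟨g, hg, rfl⟩⟩
  have hN_le : N ≤ min g1.V.card g2.V.card + M := by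
    obtain ⟨g, hg, rfl⟩ := hN.1
    have := bound g hg
    omega
  have hN_ge : min g1.V.card g2.V.card + M ≤ N := by
    obtain ⟨g, hg, hgM⟩ := hM.1
    obtain ⟨g', hg', hV, hE⟩ := hg.exists_card_V_eq h1 h2 hg.card_V_le_min le_rfl
    exact hN.2 ⟨g', hg', by rw [hV, hE, hgM]⟩
  refine ⟨le_antisymm hN_le hN_ge, fun gs hgs hgsN => ?_⟩
  have := bound gs hgs
  omega
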